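/- arXiv:2002.04963 — 3 statements merged into one kernel-verified Lean document; each statement's English description precedes it below -/
import Mathlib

section
/- Let d ≥ 1, let p satisfy 1 < p < 1 + 2/d, let C > 0 and let N > 0 be a real number. Then the infimum, over all measurable functions ρ : ℝ^d → [0,∞) with ∫_{ℝ^d} ρ = N and ∫_{ℝ^d} ρ^{1+2/d} < ∞, of ∫_{ℝ^d} ( C ρ(x)^{1+2/d} − (1/p) ρ(x)^p ) dx equals −N (1 + 2/d − p) (d/(2p)) ( d(p−1)/(2pC) )^{(p−1)/(1 + 2/d − p)}. -/
/-!
Write `q = 1 + 2/d`. The function `t ↦ C t^(q-1) - t^(p-1)/p` on `(0, ∞)` attains its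
minimum `e < 0` at a height `t₀`; by Young's inequality with exponents `(q-1)/(p-1)` and
`(q-1)/(q-p)` this gives the pointwise bound `C t^q - t^p/p ≥ e t` for all `t ≥ 0`.
Integrating, every admissible `ρ` has energy at least `e N`, and equality holds for
`ρ = t₀ · 1_B` with `B` a ball of volume `N / t₀`.
-/

open MeasureTheory Real Filter Topology

noncomputable section

/-- Euclidean space `ℝ^d`. -/
abbrev Ed (d : ℕ) : Type := EuclideanSpace ℝ (Fin d)

/-- An admissible `N`-tuple: each component is continuously differentiable,
square-integrable with square-integrable gradient, and the components are
orthonormal in `L²(ℝ^d)`. -/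
structure Admissible (d N : ℕ) (u : Fin N → Ed d → ℂ) : Prop where
  contDiff : ∀ n, ContDiff ℝ 1 (u n)
  sqInt : ∀ n, Integrable (fun x : Ed d => ‖u n x‖ ^ 2)
  gradSqInt : ∀ n, Integrable (fun x : Ed d => ‖fderiv ℝ (u n) x‖ ^ 2)
  orthonormal : ∀ j k, ∫ x : Ed d, u j x * (starRingEnd ℂ) (u k x)
      = if j = k then 1 else 0

/-- The density `ρ_u = ∑ₙ |uₙ|²` of an `N`-tuple. -/
def density (d N : ℕ) (u : Fin N → Ed d → ℂ) (x : Ed d) : ℝ :=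
  ∑ n, ‖u n x‖ ^ 2

/-- The NLS energy of an `N`-tuple. -/
def energy (d N : ℕ) (p : ℝ) (u : Fin N → Ed d → ℂ) : ℝ :=
  (∑ n, ∫ x : Ed d, ‖fderiv ℝ (u n) x‖ ^ 2)
    - (1 / p) * ∫ x : Ed d, density d N u x ^ p

/-- `J(N)`: the infimum of the energy over admissible `N`-tuples. -/
def J (d : ℕ) (p : ℝ) (N : ℕ) : ℝ :=
  sInf { e : ℝ | ∃ u : Fin N → Ed d → ℂ, Admissible d N u ∧ e = energy d N p u }

/-- The occupation weight: `λ - N + 1` on the last index, `1` otherwise. -/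
def wt (N : ℕ) (lam : ℝ) (n : Fin N) : ℝ :=
  if (n : ℕ) = N - 1 then lam - N + 1 else 1

/-- The weighted density `ρ_{u,λ}`. -/
def densityW (d N : ℕ) (lam : ℝ) (u : Fin N → Ed d → ℂ) (x : Ed d) : ℝ :=
  ∑ n, wt N lam n * ‖u n x‖ ^ 2

/-- The weighted kinetic energy `T_λ(u)`. -/
def kineticW (d N : ℕ) (lam : ℝ) (u : Fin N → Ed d → ℂ) : ℝ :=
  ∑ n, wt N lam n * ∫ x : Ed d, ‖fderiv ℝ (u n) x‖ ^ 2

/-- The weighted energy `E_λ(u)`. -/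
def energyW (d N : ℕ) (p lam : ℝ) (u : Fin N → Ed d → ℂ) : ℝ :=
  kineticW d N lam u - (1 / p) * ∫ x : Ed d, densityW d N lam u x ^ p

/-- `J(λ)` for real `λ`: the infimum of the weighted energy over admissible
`⌈λ⌉`-tuples. -/
def Jw (d : ℕ) (p : ℝ) (lam : ℝ) : ℝ :=
  sInf { e : ℝ | ∃ u : Fin ⌈lam⌉₊ → Ed d → ℂ,
    Admissible d ⌈lam⌉₊ u ∧ e = energyW d ⌈lam⌉₊ p lam u }

/-- The one-function NLS infimum `I(d,p,λ)`. -/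
def Infimum1 (d : ℕ) (p lam : ℝ) : ℝ :=
  sInf { e : ℝ | ∃ u : Ed d → ℂ, ContDiff ℝ 1 u ∧
    Integrable (fun x : Ed d => ‖u x‖ ^ 2) ∧
    Integrable (fun x : Ed d => ‖fderiv ℝ u x‖ ^ 2) ∧
    (∫ x : Ed d, ‖u x‖ ^ 2) = lam ∧
    e = (∫ x : Ed d, ‖fderiv ℝ u x‖ ^ 2)
        - (1 / p) * ∫ x : Ed d, ‖u x‖ ^ (2 * p) }

/-- The Laplacian of `f : ℝ^d → ℂ`, as the sum of the second partial
derivatives in the coordinate directions. -/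
def lap (d : ℕ) (f : Ed d → ℂ) (x : Ed d) : ℂ :=
  ∑ i : Fin d,
    fderiv ℝ (fun y => fderiv ℝ f y (EuclideanSpace.single i (1 : ℝ))) x
      (EuclideanSpace.single i (1 : ℝ))

/-- The `q`-spherical average `[f]_q(x)`, computed with respect to the surface
measure on the unit sphere. -/
def sphAvg (d : ℕ) (q : ℝ) (f : Ed d → ℝ) (x : Ed d) : ℝ :=
  (∫ ω : Metric.sphere (0 : Ed d) 1, |f (‖x‖ • (ω : Ed d))| ^ q
      ∂((volume : Measure (Ed d)).toSphere)) ^ (1 / q)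

/-- The surface measure of the unit sphere `S^{d-1} ⊂ ℝ^d`. -/
def omegaSphere (d : ℕ) : ℝ :=
  (((volume : Measure (Ed d)).toSphere) Set.univ).toReal

/-- The Thomas–Fermi constant. -/
def cTF (d : ℕ) : ℝ :=
  (4 * π ^ 2 * d / (d + 2)) * ((d : ℝ) / omegaSphere d) ^ (2 / (d : ℝ))

namespace Real

theorem rpow_le_mul_rpow_add {a b x t : ℝ} (ha : 0 < a) (hab : a < b) (hx : 0 < x)
    (ht : 0 ≤ t) :
    t ^ a ≤ a / b * x * t ^ b + (b - a) / b * x ^ (-(a / (b - a))) := by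
  have hb : 0 < b := ha.trans hab
  have hba : 0 < b - a := sub_pos.mpr hab
  have hconj : (b / a).HolderConjugate (b / (b - a)) :=
    ⟨by field_simp; ring, by positivity, by positivity⟩
  have key := young_inequality_of_nonneg (by positivity : 0 ≤ x ^ (a / b) * t ^ a)
    (by positivity : 0 ≤ x ^ (-(a / b))) hconj
  have hprod : x ^ (a / b) * t ^ a * x ^ (-(a / b)) = t ^ a := by
    rw [mul_right_comm, ← rpow_add hx]; simp
  have hfirst : (x ^ (a / b) * t ^ a) ^ (b / a) = x * t ^ b := by
    rw [mul_rpow (by positivity) (by positivity), ← rpow_mul hx.le, ← rpow_mul ht,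
      div_mul_div_cancel₀' ha.ne', div_self hb.ne', mul_div_cancel₀ _ ha.ne', rpow_one]
  have hsecond : (x ^ (-(a / b))) ^ (b / (b - a)) = x ^ (-(a / (b - a))) := by
    rw [← rpow_mul hx.le]; congr 1; field_simp
  rw [hprod, hfirst, hsecond] at key
  calc t ^ a ≤ x * t ^ b / (b / a) + x ^ (-(a / (b - a))) / (b / (b - a)) := key
    _ = _ := by field_simp

theorem rpow_le_add_rpow {p q t : ℝ} (hp : 1 ≤ p) (hpq : p ≤ q) (ht : 0 ≤ t) :
    t ^ p ≤ t + t ^ q := by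
  rcases le_total t 1 with h | h
  · have := rpow_le_rpow_of_exponent_ge' ht h (by linarith) hp
    rw [rpow_one] at this
    linarith [rpow_nonneg ht q]
  · linarith [rpow_le_rpow_of_exponent_le h hpq]

theorem rpow_eq_mul_rpow_sub_one {q t : ℝ} (ht : 0 ≤ t) (hq : q ≠ 0) :
    t ^ q = t * t ^ (q - 1) := by
  rw [← rpow_one_add' ht (by simpa using hq), add_sub_cancel]

end Real

def minimizingHeight (C p q : ℝ) : ℝ := ((p - 1) / (p * (q - 1) * C)) ^ (1 / (q - p))

def minEnergyPerMass (C p q : ℝ) : ℝ :=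
  -((q - p) / (p * (q - 1))) * ((p - 1) / (p * (q - 1) * C)) ^ ((p - 1) / (q - p))

section Pointwise

variable {C p q : ℝ}

theorem minimizingHeight_pos (hp : 1 < p) (hpq : p < q) (hC : 0 < C) :
    0 < minimizingHeight C p q :=
  rpow_pos_of_pos (div_pos (by linarith) (mul_pos (mul_pos (by linarith) (by linarith)) hC)) _

theorem minEnergyPerMass_mul_le (hp : 1 < p) (hpq : p < q) (hC : 0 < C) {t : ℝ} (ht : 0 ≤ t) :
    minEnergyPerMass C p q * t ≤ C * t ^ q - 1 / p * t ^ p := by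
  have hp0 : 0 < p := by linarith
  have hq1 : 0 < q - 1 := by linarith
  have young := rpow_le_mul_rpow_add (x := p * (q - 1) * C / (p - 1)) (sub_pos.mpr hp)
    (by linarith : p - 1 < q - 1) (by positivity) ht
  rw [rpow_neg (by positivity), ← inv_rpow (by positivity), inv_div, sub_sub_sub_cancel_right,
    show (p - 1) / (q - 1) * (p * (q - 1) * C / (p - 1)) = p * C by
      field_simp [(sub_pos.mpr hp).ne']] at young
  rw [rpow_eq_mul_rpow_sub_one ht (by linarith : q ≠ 0),
    rpow_eq_mul_rpow_sub_one ht (by linarith : p ≠ 0), minEnergyPerMass]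
  generalize ((p - 1) / (p * (q - 1) * C)) ^ ((p - 1) / (q - p)) = M at young ⊢
  have := mul_le_mul_of_nonneg_left young (by positivity : 0 ≤ t / p)
  field_simp at this ⊢
  linarith

theorem energy_minimizingHeight (hp : 1 < p) (hpq : p < q) (hC : 0 < C) :
    C * minimizingHeight C p q ^ q - 1 / p * minimizingHeight C p q ^ p =
      minEnergyPerMass C p q * minimizingHeight C p q := by
  set A := (p - 1) / (p * (q - 1) * C) with hA_def
  have hA : 0 < A := div_pos (by linarith) (mul_pos (mul_pos (by linarith) (by linarith)) hC)
  have ht0 : 0 ≤ minimizingHeight C p q := rpow_nonneg hA.le _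
  have hlow : minimizingHeight C p q ^ (p - 1) = A ^ ((p - 1) / (q - p)) := by
    rw [minimizingHeight, ← rpow_mul hA.le, one_div_mul_eq_div]
  have hhigh : minimizingHeight C p q ^ (q - 1) = A ^ ((p - 1) / (q - p)) * A := by
    rw [minimizingHeight, ← rpow_mul hA.le, ← rpow_add_one hA.ne']
    congr 1
    field_simp [(by linarith : q - p ≠ 0)]
    ring
  have hCA : C * A = (p - 1) / (p * (q - 1)) := by
    rw [hA_def]; field_simp
  rw [rpow_eq_mul_rpow_sub_one ht0 (by linarith : q ≠ 0),
    rpow_eq_mul_rpow_sub_one ht0 (by linarith : p ≠ 0), hlow, hhigh, minEnergyPerMass, ← hA_def]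
  calc _ = minimizingHeight C p q * A ^ ((p - 1) / (q - p)) * (C * A - 1 / p) := by ring
    _ = _ := by
      rw [hCA]
      field_simp [(by linarith : p ≠ 0), (by linarith : q - 1 ≠ 0)]
      ring

end Pointwise

section Integral

variable {α : Type*} [MeasurableSpace α] {μ : Measure α} {C p q : ℝ}

theorem MeasureTheory.Integrable.rpow_of_le_of_integrable_rpow {ρ : α → ℝ}
    (hρ0 : ∀ x, 0 ≤ ρ x) (hp : 1 ≤ p) (hpq : p ≤ q) (hρ : Integrable ρ μ)
    (hρq : Integrable (fun x => ρ x ^ q) μ) :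
    Integrable (fun x => ρ x ^ p) μ :=
  (hρ.add hρq).mono' (hρ.aemeasurable.pow_const p).aestronglyMeasurable
    (.of_forall fun x => by
      rw [norm_of_nonneg (rpow_nonneg (hρ0 x) p)]
      exact rpow_le_add_rpow hp hpq (hρ0 x))

theorem minEnergyPerMass_mul_integral_le (hp : 1 < p) (hpq : p < q) (hC : 0 < C)
    {ρ : α → ℝ} (hρ0 : ∀ x, 0 ≤ ρ x) (hρ : Integrable ρ μ)
    (hρq : Integrable (fun x => ρ x ^ q) μ) :
    minEnergyPerMass C p q * ∫ x, ρ x ∂μ ≤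
      ∫ x, (C * ρ x ^ q - 1 / p * ρ x ^ p) ∂μ := by
  rw [← integral_const_mul]
  exact integral_mono (hρ.const_mul _) ((hρq.const_mul C).sub
    ((hρ.rpow_of_le_of_integrable_rpow hρ0 hp.le hpq.le hρq).const_mul _))
    fun x => minEnergyPerMass_mul_le hp hpq hC (hρ0 x)

theorem sInf_integral_eq_minEnergyPerMass_mul (hp : 1 < p) (hpq : p < q) (hC : 0 < C)
    {N : ℝ} (hN : 0 ≤ N)
    (hA : ∃ A, MeasurableSet A ∧ μ A = ENNReal.ofReal (N / minimizingHeight C p q)) :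
    sInf { e : ℝ | ∃ ρ : α → ℝ, Measurable ρ ∧ (∀ x, 0 ≤ ρ x) ∧
        Integrable ρ μ ∧ (∫ x, ρ x ∂μ) = N ∧ Integrable (fun x => ρ x ^ q) μ ∧
        e = ∫ x, (C * ρ x ^ q - 1 / p * ρ x ^ p) ∂μ } = minEnergyPerMass C p q * N := by
  obtain ⟨A, hAm, hμA⟩ := hA
  have hE := energy_minimizingHeight hp hpq hC
  set t₀ := minimizingHeight C p q
  have ht₀ : 0 < t₀ := minimizingHeight_pos hp hpq hC
  have hμA_fin : μ A < ⊤ := hμA ▸ ENNReal.ofReal_lt_top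
  have hμA_real : μ.real A = N / t₀ := by
    rw [measureReal_def, hμA, ENNReal.toReal_ofReal (div_nonneg hN ht₀.le)]
  have hind : ∀ {F : ℝ → ℝ}, F 0 = 0 →
      (fun x => F (A.indicator (fun _ => t₀) x)) = A.indicator fun _ => F t₀ := fun hF =>
    (Set.indicator_comp_of_zero hF).symm
  have hconst : ∀ c : ℝ, Integrable (A.indicator fun _ => c) μ := fun c =>
    (integrable_indicator_iff hAm).mpr (integrableOn_const hμA_fin.ne)
  refine IsLeast.csInf_eq ⟨?_, ?_⟩
  · refine ⟨A.indicator fun _ => t₀, measurable_const.indicator hAm,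
      Set.indicator_nonneg fun _ _ => ht₀.le, hconst t₀, ?_, ?_, ?_⟩
    · rw [integral_indicator_const _ hAm, hμA_real, smul_eq_mul, div_mul_cancel₀ _ ht₀.ne']
    · rw [hind (F := fun t => t ^ q) (zero_rpow (by linarith))]
      exact hconst _
    · have hF0 : C * (0 : ℝ) ^ q - 1 / p * (0 : ℝ) ^ p = 0 := by
        rw [zero_rpow (by linarith), zero_rpow (by linarith)]; ring
      rw [hind (F := fun t => C * t ^ q - 1 / p * t ^ p) hF0, integral_indicator_const _ hAm,
        hμA_real, smul_eq_mul, hE]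
      field_simp
  · rintro _ ⟨ρ, -, hρ0, hρ, hρN, hρq, rfl⟩
    exact hρN ▸ minEnergyPerMass_mul_integral_le hp hpq hC hρ0 hρ hρq

end Integral

theorem exists_ball_addHaar_eq {E : Type*} [NormedAddCommGroup E] [NormedSpace ℝ E]
    [MeasurableSpace E] [BorelSpace E] [FiniteDimensional ℝ E] [Nontrivial E]
    (μ : Measure E) [μ.IsAddHaarMeasure] {V : ℝ} (hV : 0 ≤ V) :
    ∃ r, μ (Metric.ball (0 : E) r) = ENNReal.ofReal V := by
  set n := Module.finrank ℝ E
  have hn : n ≠ 0 := Module.finrank_pos.ne'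
  set v := μ.real (Metric.ball (0 : E) 1)
  have hv : 0 < v :=
    ENNReal.toReal_pos (Metric.measure_ball_pos μ 0 one_pos).ne' measure_ball_lt_top.ne
  refine ⟨(V / v) ^ (n⁻¹ : ℝ), ?_⟩
  rw [μ.addHaar_ball 0 (by positivity), ← rpow_natCast, ← rpow_mul (by positivity),
    inv_mul_cancel₀ (by exact_mod_cast hn), rpow_one,
    ← ofReal_measureReal measure_ball_lt_top.ne, ← ENNReal.ofReal_mul (by positivity),
    div_mul_cancel₀ _ hv.ne']

/-- explicit value of the Lieb–Thirring-type minimisation problem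
over densities with prescribed mass. -/
theorem statement4 (d : ℕ) (hd : 1 ≤ d) (p : ℝ) (hp1 : 1 < p)
    (hp2 : p < 1 + 2 / d) (C : ℝ) (hC : 0 < C) (N : ℝ) (hN : 0 < N) :
    sInf { e : ℝ | ∃ ρ : Ed d → ℝ, Measurable ρ ∧ (∀ x, 0 ≤ ρ x) ∧
        Integrable ρ ∧ (∫ x : Ed d, ρ x) = N ∧
        Integrable (fun x : Ed d => ρ x ^ (1 + 2 / (d : ℝ))) ∧
        e = ∫ x : Ed d, (C * ρ x ^ (1 + 2 / (d : ℝ)) - (1 / p) * ρ x ^ p) }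
      = -N * (1 + 2 / d - p) * (d / (2 * p)) *
          ((d * (p - 1)) / (2 * p * C)) ^ ((p - 1) / (1 + 2 / d - p)) := by
  have : Nontrivial (Ed d) := by
    have : Nonempty (Fin d) := Fin.pos_iff_nonempty.mp hd
    infer_instance
  obtain ⟨r, hr⟩ := exists_ball_addHaar_eq (volume : Measure (Ed d))
    (div_nonneg hN.le (minimizingHeight_pos hp1 hp2 hC).le)
  rw [sInf_integral_eq_minEnergyPerMass_mul hp1 hp2 hC hN.le ⟨_, measurableSet_ball, hr⟩,
    minEnergyPerMass, add_sub_cancel_left,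
    show (p - 1) / (p * (2 / d) * C) = d * (p - 1) / (2 * p * C) by field_simp]
  field_simp
end
end

section
/- Let d ≥ 1 and 1 < p < 1 + 2/d. Then for every positive integer N the function λ ↦ J(λ) is concave on the open interval (N−1, N). -/
open MeasureTheory Real Filter Topology

noncomputable section

/-!
On `(N - 1, N)` we have `⌈λ⌉₊ = N`, so `J` is the infimum, over one fixed family of admissible
`N`-tuples `u`, of the functions `λ ↦ E_λ(u)`. Each of them is concave: the weights are affine in
`λ`, hence so are the kinetic term and `ρ_{u,λ}`, and `t ↦ t ^ p` is convex.

An infimum of concave functions is concave as long as it is finite, and finiteness does not depend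
on `λ`. Indeed, the weights at two points `x, λ` of the interval are comparable, and the dilation
`u ↦ θ^{d/2} u(θ ·)` multiplies the kinetic term by `θ²` and `∫ ρ^p` by `θ^{d(p-1)}`; since
`d(p-1) ≠ 2`, `θ` can be chosen to balance the two comparison constants, giving
`E_λ(v) ≤ a E_x(u)` with `a > 0` independent of `u`. Where the infimum is `-∞`, `sInf` returns
the junk value `0` on the whole interval, which is concave.
-/

open Set

theorem concaveOn_iInf_of_bddBelow_imp {E ι : Type*} [AddCommGroup E] [Module ℝ E] {s : Set E}
    {f : ι → E → ℝ} (hs : Convex ℝ s) (hf : ∀ i, ConcaveOn ℝ s (f i))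
    (hbdd : ∀ x ∈ s, ∀ y ∈ s,
      BddBelow (range fun i => f i x) → BddBelow (range fun i => f i y)) :
    ConcaveOn ℝ s fun x => ⨅ i, f i x := by
  refine ⟨hs, fun x hx y hy a b ha hb hab => ?_⟩
  have hz := hs hx hy ha hb hab
  rcases isEmpty_or_nonempty ι with hι | hι
  · simp
  by_cases hbz : BddBelow (range fun i => f i (a • x + b • y))
  · have hbx := hbdd _ hz x hx hbz
    have hby := hbdd _ hz y hy hbz
    refine le_ciInf fun i => ?_
    calc a • (⨅ i, f i x) + b • ⨅ i, f i y ≤ a • f i x + b • f i y := by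
          gcongr
          · exact ciInf_le hbx i
          · exact ciInf_le hby i
      _ ≤ f i (a • x + b • y) := (hf i).2 hx hy ha hb hab
  · have hbx : ¬BddBelow (range fun i => f i x) := fun h => hbz (hbdd x hx _ hz h)
    have hby : ¬BddBelow (range fun i => f i y) := fun h => hbz (hbdd y hy _ hz h)
    simp [Real.iInf_of_not_bddBelow hbz, Real.iInf_of_not_bddBelow hbx,
      Real.iInf_of_not_bddBelow hby]

section Weights

variable {N : ℕ} {x y lam C : ℝ}

theorem ceil_eq_of_mem_Ioo (h : lam ∈ Ioo ((N : ℝ) - 1) N) : ⌈lam⌉₊ = N := by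
  refine le_antisymm (Nat.ceil_le.mpr h.2.le) (Nat.lt_add_one_iff.mp ?_)
  have : (N : ℝ) < ⌈lam⌉₊ + 1 := by linarith [h.1, Nat.le_ceil lam]
  exact_mod_cast this

theorem wt_pos (h : lam ∈ Ioo ((N : ℝ) - 1) N) (n : Fin N) : 0 < wt N lam n := by
  unfold wt
  split_ifs <;> linarith [h.1]

theorem wt_affine {a b : ℝ} (hab : a + b = 1) (n : Fin N) :
    wt N (a * x + b * y) n = a * wt N x n + b * wt N y n := by
  unfold wt
  split_ifs
  · linear_combination ((N : ℝ) - 1) * hab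
  · linarith

theorem exists_wt_le_mul_wt (hx : x ∈ Ioo ((N : ℝ) - 1) N) :
    ∃ C > 0, ∀ n, wt N lam n ≤ C * wt N x n := by
  refine ⟨max 1 ((lam - N + 1) / (x - N + 1)), by positivity, fun n => ?_⟩
  unfold wt
  split_ifs
  · have hx' : 0 < x - N + 1 := by linarith [hx.1]
    calc lam - N + 1 = (lam - N + 1) / (x - N + 1) * (x - N + 1) := by field_simp
      _ ≤ _ := by gcongr; exact le_max_right _ _
  · simp

theorem sum_wt_mul_le (hC : ∀ n, wt N lam n ≤ C * wt N x n) {c : Fin N → ℝ}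
    (hc : ∀ n, 0 ≤ c n) : ∑ n, wt N lam n * c n ≤ C * ∑ n, wt N x n * c n := by
  rw [Finset.mul_sum]
  refine Finset.sum_le_sum fun n _ => ?_
  rw [← mul_assoc]
  exact mul_le_mul_of_nonneg_right (hC n) (hc n)

theorem sum_wt_mul_affine {a b : ℝ} (hab : a + b = 1) (c : Fin N → ℝ) :
    ∑ n, wt N (a * x + b * y) n * c n
      = a * ∑ n, wt N x n * c n + b * ∑ n, wt N y n * c n := by
  simp only [wt_affine hab, add_mul, mul_assoc, Finset.sum_add_distrib, Finset.mul_sum]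

end Weights

section Functionals

variable {d N : ℕ} {p x y lam C : ℝ} {u : Fin N → Ed d → ℂ}

theorem densityW_nonneg (h : lam ∈ Ioo ((N : ℝ) - 1) N) (u : Fin N → Ed d → ℂ) (z : Ed d) :
    0 ≤ densityW d N lam u z :=
  Finset.sum_nonneg fun n _ => mul_nonneg (wt_pos h n).le (by positivity)

theorem densityW_le_of_wt_le (hC : ∀ n, wt N lam n ≤ C * wt N x n) (u : Fin N → Ed d → ℂ)
    (z : Ed d) : densityW d N lam u z ≤ C * densityW d N x u z :=
  sum_wt_mul_le hC fun _ => by positivity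

theorem kineticW_le_of_wt_le (hC : ∀ n, wt N lam n ≤ C * wt N x n) (u : Fin N → Ed d → ℂ) :
    kineticW d N lam u ≤ C * kineticW d N x u :=
  sum_wt_mul_le hC fun _ => integral_nonneg fun _ => by positivity

theorem densityW_affine {a b : ℝ} (hab : a + b = 1) (u : Fin N → Ed d → ℂ) (z : Ed d) :
    densityW d N (a * x + b * y) u z = a * densityW d N x u z + b * densityW d N y u z :=
  sum_wt_mul_affine hab _

theorem concaveOn_kineticW {s : Set ℝ} (hs : Convex ℝ s) (u : Fin N → Ed d → ℂ) :
    ConcaveOn ℝ s fun lam => kineticW d N lam u :=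
  ⟨hs, fun _ _ _ _ _ _ _ _ hab => (sum_wt_mul_affine hab _).ge⟩

theorem continuous_densityW (hu : ∀ n, Continuous (u n)) (lam : ℝ) :
    Continuous (densityW d N lam u) := by
  unfold densityW
  fun_prop

theorem densityW_rpow_le (hp : 0 ≤ p) (hx : x ∈ Ioo ((N : ℝ) - 1) N)
    (hl : lam ∈ Ioo ((N : ℝ) - 1) N) (hC0 : 0 ≤ C) (hC : ∀ n, wt N lam n ≤ C * wt N x n)
    (u : Fin N → Ed d → ℂ) (z : Ed d) :
    densityW d N lam u z ^ p ≤ C ^ p * densityW d N x u z ^ p := by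
  rw [← mul_rpow hC0 (densityW_nonneg hx u z)]
  exact rpow_le_rpow (densityW_nonneg hl u z) (densityW_le_of_wt_le hC u z) hp

theorem integrable_densityW_rpow_of_integrable (hp : 0 ≤ p) (hu : ∀ n, Continuous (u n))
    (hx : x ∈ Ioo ((N : ℝ) - 1) N) (hl : lam ∈ Ioo ((N : ℝ) - 1) N)
    (h : Integrable fun z => densityW d N x u z ^ p) :
    Integrable fun z => densityW d N lam u z ^ p := by
  obtain ⟨C, hC0, hC⟩ := exists_wt_le_mul_wt (lam := lam) hx
  have hcont := (continuous_densityW hu lam).rpow_const fun _ => Or.inr hp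
  refine (h.const_mul (C ^ p)).mono' hcont.aestronglyMeasurable (ae_of_all _ fun z => ?_)
  rw [norm_of_nonneg (rpow_nonneg (densityW_nonneg hl u z) p)]
  exact densityW_rpow_le hp hx hl hC0.le hC u z

theorem integral_densityW_rpow_le (hp : 0 ≤ p) (hu : ∀ n, Continuous (u n))
    (hx : x ∈ Ioo ((N : ℝ) - 1) N) (hl : lam ∈ Ioo ((N : ℝ) - 1) N) (hC0 : 0 ≤ C)
    (hC : ∀ n, wt N lam n ≤ C * wt N x n) :
    ∫ z, densityW d N lam u z ^ p ≤ C ^ p * ∫ z, densityW d N x u z ^ p := by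
  by_cases h : Integrable fun z => densityW d N x u z ^ p
  · rw [← integral_const_mul]
    exact integral_mono (integrable_densityW_rpow_of_integrable hp hu hx hl h) (h.const_mul _)
      (densityW_rpow_le hp hx hl hC0 hC u)
  · have h' := mt (integrable_densityW_rpow_of_integrable hp hu hl hx) h
    rw [integral_undef h, integral_undef h', mul_zero]

theorem convexOn_integral_densityW_rpow (hp : 1 ≤ p) (hu : ∀ n, Continuous (u n)) :
    ConvexOn ℝ (Ioo ((N : ℝ) - 1) N) fun lam => ∫ z, densityW d N lam u z ^ p := by
  refine ⟨convex_Ioo _ _, fun x hx y hy a b ha hb hab => ?_⟩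
  have hz := convex_Ioo _ _ hx hy ha hb hab
  simp only [smul_eq_mul] at hz ⊢
  have hp0 : 0 ≤ p := zero_le_one.trans hp
  by_cases h : Integrable fun z => densityW d N x u z ^ p
  · have hy' := integrable_densityW_rpow_of_integrable hp0 hu hx hy h
    have hz' := integrable_densityW_rpow_of_integrable hp0 hu hx hz h
    rw [← integral_const_mul, ← integral_const_mul,
      ← integral_add (h.const_mul _) (hy'.const_mul _)]
    refine integral_mono hz' ((h.const_mul _).add (hy'.const_mul _)) fun z => ?_
    rw [densityW_affine hab]
    exact (convexOn_rpow hp).2 (densityW_nonneg hx u z) (densityW_nonneg hy u z) ha hb hab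
  · rw [integral_undef h,
      integral_undef (mt (integrable_densityW_rpow_of_integrable hp0 hu hy hx) h),
      integral_undef (mt (integrable_densityW_rpow_of_integrable hp0 hu hz hx) h)]
    simp

theorem concaveOn_energyW (hp : 1 ≤ p) (hu : ∀ n, Continuous (u n)) :
    ConcaveOn ℝ (Ioo ((N : ℝ) - 1) N) fun lam => energyW d N p lam u :=
  (concaveOn_kineticW (convex_Ioo _ _) u).sub
    ((convexOn_integral_densityW_rpow hp hu).smul (by positivity : (0 : ℝ) ≤ 1 / p))

end Functionals

section Dilation

variable {d N : ℕ} {θ : ℝ}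

def dilate (θ : ℝ) (f : Ed d → ℂ) (x : Ed d) : ℂ :=
  √(θ ^ d) • f (θ • x)

theorem integral_pow_smul_comp_smul {F : Type*} [NormedAddCommGroup F] [NormedSpace ℝ F]
    (hθ : 0 < θ) (g : Ed d → F) : ∫ x, θ ^ d • g (θ • x) = ∫ x, g x := by
  rw [integral_smul, Measure.integral_comp_smul, finrank_euclideanSpace_fin,
    abs_of_pos (by positivity), smul_smul, mul_inv_cancel₀ (by positivity), one_smul]

theorem integral_pow_mul_comp_smul (hθ : 0 < θ) (g : Ed d → ℝ) :
    ∫ x, θ ^ d * g (θ • x) = ∫ x, g x :=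
  integral_pow_smul_comp_smul hθ g

theorem norm_dilate_sq (hθ : 0 ≤ θ) (f : Ed d → ℂ) (x : Ed d) :
    ‖dilate θ f x‖ ^ 2 = θ ^ d * ‖f (θ • x)‖ ^ 2 := by
  rw [dilate, norm_smul, mul_pow, Real.norm_eq_abs, sq_abs, Real.sq_sqrt (by positivity)]

theorem hasFDerivAt_dilate {f : Ed d → ℂ} {x : Ed d} (hf : DifferentiableAt ℝ f (θ • x)) :
    HasFDerivAt (dilate θ f) ((√(θ ^ d) * θ) • fderiv ℝ f (θ • x)) x := by
  have h := (hf.hasFDerivAt.comp x ((hasFDerivAt_id x).const_smul θ)).const_smul √(θ ^ d)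
  rwa [show √(θ ^ d) • (fderiv ℝ f (θ • x)).comp (θ • ContinuousLinearMap.id ℝ (Ed d))
      = (√(θ ^ d) * θ) • fderiv ℝ f (θ • x) by ext v; simp [mul_smul]] at h

theorem norm_fderiv_dilate_sq (hθ : 0 ≤ θ) {f : Ed d → ℂ} (hf : Differentiable ℝ f)
    (x : Ed d) :
    ‖fderiv ℝ (dilate θ f) x‖ ^ 2 = θ ^ d * (θ ^ 2 * ‖fderiv ℝ f (θ • x)‖ ^ 2) := by
  rw [(hasFDerivAt_dilate (hf _)).fderiv, norm_smul, Real.norm_eq_abs,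
    abs_of_nonneg (by positivity), mul_pow, mul_pow, Real.sq_sqrt (by positivity), mul_assoc]

theorem admissible_dilate (hθ : 0 < θ) {u : Fin N → Ed d → ℂ} (hu : Admissible d N u) :
    Admissible d N fun n => dilate θ (u n) where
  contDiff n := ((hu.contDiff n).comp (contDiff_const_smul θ)).const_smul _
  sqInt n := by
    simp_rw [norm_dilate_sq hθ.le]
    exact ((hu.sqInt n).comp_smul hθ.ne').const_mul _
  gradSqInt n := by
    simp_rw [norm_fderiv_dilate_sq hθ.le ((hu.contDiff n).differentiable one_ne_zero)]
    exact (((hu.gradSqInt n).comp_smul hθ.ne').const_mul _).const_mul _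
  orthonormal j k := by
    have h : ∀ x, dilate θ (u j) x * (starRingEnd ℂ) (dilate θ (u k) x)
        = θ ^ d • (u j (θ • x) * (starRingEnd ℂ) (u k (θ • x))) := by
      intro x
      have hc : ((√(θ ^ d) : ℝ) : ℂ) * (√(θ ^ d) : ℂ) = ((θ ^ d : ℝ) : ℂ) := by
        rw [← Complex.ofReal_mul, Real.mul_self_sqrt (by positivity)]
      simp only [dilate, Complex.real_smul, map_mul, Complex.conj_ofReal, ← hc]
      ring
    simp_rw [h]
    rw [integral_pow_smul_comp_smul hθ (fun y => u j y * (starRingEnd ℂ) (u k y)),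
      hu.orthonormal j k]

theorem kineticW_dilate (hθ : 0 < θ) {u : Fin N → Ed d → ℂ} (hu : ∀ n, Differentiable ℝ (u n))
    (lam : ℝ) : kineticW d N lam (fun n => dilate θ (u n)) = θ ^ 2 * kineticW d N lam u := by
  unfold kineticW
  rw [Finset.mul_sum]
  refine Finset.sum_congr rfl fun n _ => ?_
  simp_rw [norm_fderiv_dilate_sq hθ.le (hu n)]
  rw [integral_pow_mul_comp_smul hθ (fun y => θ ^ 2 * ‖fderiv ℝ (u n) y‖ ^ 2),
    integral_const_mul]
  ring

theorem densityW_dilate (hθ : 0 ≤ θ) (lam : ℝ) (u : Fin N → Ed d → ℂ) (z : Ed d) :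
    densityW d N lam (fun n => dilate θ (u n)) z = θ ^ d * densityW d N lam u (θ • z) := by
  simp only [densityW, norm_dilate_sq hθ, Finset.mul_sum]
  exact Finset.sum_congr rfl fun n _ => by ring

theorem integral_densityW_rpow_dilate (hθ : 0 < θ) {lam p : ℝ}
    (hl : lam ∈ Ioo ((N : ℝ) - 1) N) (u : Fin N → Ed d → ℂ) :
    ∫ z, densityW d N lam (fun n => dilate θ (u n)) z ^ p
      = θ ^ ((d : ℝ) * (p - 1)) * ∫ z, densityW d N lam u z ^ p := by
  have h : ∀ z, densityW d N lam (fun n => dilate θ (u n)) z ^ p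
      = θ ^ ((d : ℝ) * (p - 1)) * (θ ^ d * densityW d N lam u (θ • z) ^ p) := by
    intro z
    rw [densityW_dilate hθ.le, mul_rpow (by positivity) (densityW_nonneg hl u _), ← mul_assoc,
      ← rpow_natCast, ← rpow_mul hθ.le, ← rpow_add hθ]
    ring_nf
  simp_rw [h]
  rw [integral_const_mul,
    integral_pow_mul_comp_smul hθ (fun y => densityW d N lam u y ^ p)]

end Dilation

theorem exists_pos_sq_mul_eq_rpow {α c : ℝ} (hα : α ≠ 2) (hc : 0 < c) :
    ∃ θ > 0, θ ^ 2 * c = θ ^ α := by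
  have hα' : α - 2 ≠ 0 := sub_ne_zero.mpr hα
  refine ⟨c ^ (α - 2)⁻¹, by positivity, ?_⟩
  nth_rw 2 [← rpow_inv_rpow hc.le hα']
  rw [← rpow_two, ← rpow_add (by positivity)]
  ring_nf

section Transfer

variable {d N : ℕ} {p x lam : ℝ}

theorem exists_energyW_le_mul_energyW (hp : 0 < p) (hα : (d : ℝ) * (p - 1) ≠ 2)
    (hx : x ∈ Ioo ((N : ℝ) - 1) N) (hl : lam ∈ Ioo ((N : ℝ) - 1) N) :
    ∃ a > 0, ∀ u, Admissible d N u →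
      ∃ v, Admissible d N v ∧ energyW d N p lam v ≤ a * energyW d N p x u := by
  obtain ⟨C, hC0, hC⟩ := exists_wt_le_mul_wt (lam := lam) hx
  obtain ⟨D, hD0, hD⟩ := exists_wt_le_mul_wt (lam := x) hl
  obtain ⟨θ, hθ, hθα⟩ := exists_pos_sq_mul_eq_rpow hα (mul_pos hC0 (rpow_pos_of_pos hD0 p))
  refine ⟨θ ^ 2 * C, by positivity, fun u hu => ⟨_, admissible_dilate hθ hu, ?_⟩⟩
  have hK := kineticW_le_of_wt_le hC u
  have hF := integral_densityW_rpow_le hp.le (fun n => (hu.contDiff n).continuous) hl hx hD0.le hD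
  unfold energyW
  rw [kineticW_dilate hθ fun n => (hu.contDiff n).differentiable one_ne_zero,
    integral_densityW_rpow_dilate hθ hl, ← hθα]
  have hK' := mul_le_mul_of_nonneg_left hK (sq_nonneg θ)
  have hF' := mul_le_mul_of_nonneg_left hF (by positivity : 0 ≤ θ ^ 2 * C / p)
  linear_combination hK' + hF'

theorem bddBelow_energyW_of_bddBelow (hp : 0 < p) (hα : (d : ℝ) * (p - 1) ≠ 2)
    (hx : x ∈ Ioo ((N : ℝ) - 1) N) (hl : lam ∈ Ioo ((N : ℝ) - 1) N)
    (h : BddBelow (range fun u : {u // Admissible d N u} => energyW d N p lam u)) :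
    BddBelow (range fun u : {u // Admissible d N u} => energyW d N p x u) := by
  obtain ⟨b, hb⟩ := h
  obtain ⟨a, ha, hle⟩ := exists_energyW_le_mul_energyW hp hα hx hl
  refine ⟨b / a, ?_⟩
  rintro _ ⟨u, rfl⟩
  obtain ⟨v, hv, hvu⟩ := hle u.1 u.2
  rw [div_le_iff₀' ha]
  exact (hb ⟨⟨v, hv⟩, rfl⟩).trans hvu

end Transfer

theorem Jw_eq_iInf {d N : ℕ} {p lam : ℝ} (hl : lam ∈ Ioo ((N : ℝ) - 1) N) :
    Jw d p lam = ⨅ u : {u // Admissible d N u}, energyW d N p lam u := by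
  rw [Jw, ceil_eq_of_mem_Ioo hl, iInf]
  congr 1
  ext e
  simp [eq_comm]

theorem statement10_general (d : ℕ) (p : ℝ) (hp1 : 1 < p)
    (hp2 : p < 1 + 2 / d) :
    ∀ N : ℕ, 0 < N →
      ConcaveOn ℝ (Set.Ioo ((N : ℝ) - 1) (N : ℝ)) (Jw d p) := by
  intro N _
  have hα : (d : ℝ) * (p - 1) ≠ 2 := by
    rcases Nat.eq_zero_or_pos d with rfl | hd
    · norm_num
    · have := (lt_div_iff₀ (by positivity : (0 : ℝ) < d)).mp (by linarith : p - 1 < 2 / d)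
      linarith
  refine (concaveOn_iInf_of_bddBelow_imp (convex_Ioo _ _)
    (fun u => concaveOn_energyW hp1.le fun n => (u.2.contDiff n).continuous)
    fun x hx y hy => bddBelow_energyW_of_bddBelow (by linarith) hα hy hx).congr
    fun lam hl => (Jw_eq_iInf hl).symm

/-- `λ ↦ J(λ)` is concave on each interval `(N−1, N)`. -/
theorem statement10 (d : ℕ) (hd : 1 ≤ d) (p : ℝ) (hp1 : 1 < p)
    (hp2 : p < 1 + 2 / d) :
    ∀ N : ℕ, 0 < N →
      ConcaveOn ℝ (Set.Ioo ((N : ℝ) - 1) (N : ℝ)) (Jw d p) :=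
  statement10_general d p hp1 hp2
end
end

section
/- Let d ≥ 1 and let ε, ε' be real numbers with 0 < ε' ≤ ε. Then there exists a constant C > 0, depending only on d, ε and ε', such that for every R ∈ ℝ^d: ∫_{ℝ^d} e^{−ε|x|} e^{−ε'|R−x|} dx ≤ C (1 + |R|^d) e^{−ε'|R|}. -/
/-!
Split the integral at `‖x‖ = 2‖R‖`. Since `ε' ≤ ε`, the triangle inequality
`‖R‖ ≤ ‖x‖ + ‖R - x‖` bounds the integrand by `e^{-ε'‖R‖}` everywhere, and where
`‖x‖ ≥ 2‖R‖` the bound `‖R - x‖ ≥ ‖x‖ - ‖R‖ ≥ ‖R‖` improves it to `e^{-ε'‖R‖} e^{-ε'‖x‖}`.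
So the ball contributes at most `e^{-ε'‖R‖}` times its volume `(2‖R‖)^d |B₁|`, and its
complement at most `e^{-ε'‖R‖} ∫ e^{-ε'‖x‖}`.
-/

open MeasureTheory Real Filter Topology

noncomputable section

open Metric Module

section Pointwise

variable {E : Type*} [SeminormedAddCommGroup E] {ε ε' : ℝ}

theorem exp_neg_mul_norm_mul_exp_neg_mul_norm_sub_le (hε' : 0 ≤ ε') (hle : ε' ≤ ε) (R x : E) :
    exp (-ε * ‖x‖) * exp (-ε' * ‖R - x‖) ≤ exp (-ε' * ‖R‖) := by
  rw [← exp_add, exp_le_exp]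
  have htri : ‖R‖ ≤ ‖x‖ + ‖R - x‖ := norm_le_insert' R x
  nlinarith [mul_le_mul_of_nonneg_right hle (norm_nonneg x)]

theorem exp_neg_mul_norm_mul_exp_neg_mul_norm_sub_le_of_le (hε' : 0 ≤ ε') (hle : ε' ≤ ε)
    {R x : E} (hx : 2 * ‖R‖ ≤ ‖x‖) :
    exp (-ε * ‖x‖) * exp (-ε' * ‖R - x‖) ≤ exp (-ε' * ‖R‖) * exp (-ε' * ‖x‖) := by
  rw [← exp_add, ← exp_add, exp_le_exp]
  have htri : ‖x‖ - ‖R‖ ≤ ‖R - x‖ := by simpa [norm_sub_rev x R] using norm_sub_norm_le x R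
  nlinarith [mul_le_mul_of_nonneg_right hle (norm_nonneg x)]

theorem exp_neg_mul_norm_mul_exp_neg_mul_norm_sub_le_indicator (hε' : 0 ≤ ε') (hle : ε' ≤ ε)
    (R x : E) :
    exp (-ε * ‖x‖) * exp (-ε' * ‖R - x‖) ≤
      exp (-ε' * ‖R‖) * ((closedBall 0 (2 * ‖R‖)).indicator 1 x + exp (-ε' * ‖x‖)) := by
  by_cases hx : x ∈ closedBall 0 (2 * ‖R‖)
  · rw [Set.indicator_of_mem hx, Pi.one_apply, mul_add, mul_one]
    exact (exp_neg_mul_norm_mul_exp_neg_mul_norm_sub_le hε' hle R x).trans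
      (le_add_of_nonneg_right (by positivity))
  · rw [Set.indicator_of_notMem hx, zero_add]
    rw [mem_closedBall_zero_iff, not_le] at hx
    exact exp_neg_mul_norm_mul_exp_neg_mul_norm_sub_le_of_le hε' hle hx.le

end Pointwise

section Integral

variable {E : Type*} [NormedAddCommGroup E] [NormedSpace ℝ E] [FiniteDimensional ℝ E]
  [MeasurableSpace E] [BorelSpace E] (μ : Measure E) [μ.IsAddHaarMeasure]

theorem integrable_exp_neg_mul_norm {c : ℝ} (hc : 0 < c) :
    Integrable (fun x : E => exp (-c * ‖x‖)) μ := by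
  -- `e^{-ct} = e^c e^{-c(1+t)}`, and `(1 + ‖x‖)^{-(dim E + 1)}` is integrable
  have hdecay : (fun t : ℝ => exp (-c * t)) =O[atTop]
      fun t => (1 + t) ^ (-(finrank ℝ E + 1 : ℝ)) := by
    have := ((isLittleO_exp_neg_mul_rpow_atTop hc (-(finrank ℝ E + 1 : ℝ))).comp_tendsto
      (tendsto_atTop_add_const_left _ 1 tendsto_id)).isBigO.const_mul_left (exp c)
    refine this.congr_left fun t => ?_
    simp only [Function.comp_apply, id, ← exp_add]
    ring_nf
  exact (by fun_prop : Continuous fun x : E => exp (-c * ‖x‖)).locallyIntegrable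
    |>.integrable_of_isBigO_cocompact (hdecay.comp_tendsto tendsto_norm_cocompact_atTop)
      ((integrable_one_add_norm (by linarith)).integrableAtFilter _)

theorem integral_exp_neg_mul_norm_mul_exp_neg_mul_norm_sub_le {ε ε' : ℝ} (hε' : 0 < ε')
    (hle : ε' ≤ ε) (R : E) :
    ∫ x, exp (-ε * ‖x‖) * exp (-ε' * ‖R - x‖) ∂μ ≤
      exp (-ε' * ‖R‖) * ((2 * ‖R‖) ^ finrank ℝ E * μ.real (ball 0 1) +
        ∫ x, exp (-ε' * ‖x‖) ∂μ) := by
  have hball : Integrable ((closedBall (0 : E) (2 * ‖R‖)).indicator 1) μ :=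
    (integrable_indicator_iff measurableSet_closedBall).2
      (integrableOn_const (C := (1 : ℝ)) measure_closedBall_lt_top.ne)
  have hexp := integrable_exp_neg_mul_norm μ hε'
  calc ∫ x, exp (-ε * ‖x‖) * exp (-ε' * ‖R - x‖) ∂μ
      ≤ ∫ x, exp (-ε' * ‖R‖) * ((closedBall 0 (2 * ‖R‖)).indicator 1 x + exp (-ε' * ‖x‖)) ∂μ :=
        integral_mono_of_nonneg (.of_forall fun _ => by positivity)
          ((hball.add hexp).const_mul _)
          (.of_forall (exp_neg_mul_norm_mul_exp_neg_mul_norm_sub_le_indicator hε'.le hle R))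
    _ = _ := by
        rw [integral_const_mul, integral_add hball hexp,
          integral_indicator_one measurableSet_closedBall, Measure.addHaar_real_closedBall μ 0 (by positivity)]

theorem exists_integral_exp_neg_mul_norm_mul_exp_neg_mul_norm_sub_le {ε ε' : ℝ} (hε' : 0 < ε')
    (hle : ε' ≤ ε) :
    ∃ C : ℝ, 0 < C ∧ ∀ R : E, ∫ x, exp (-ε * ‖x‖) * exp (-ε' * ‖R - x‖) ∂μ ≤
      C * (1 + ‖R‖ ^ finrank ℝ E) * exp (-ε' * ‖R‖) := by
  set n := finrank ℝ E
  set v := μ.real (ball (0 : E) 1)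
  set K := ∫ x, exp (-ε' * ‖x‖) ∂μ
  have hv : 0 ≤ v := measureReal_nonneg
  have hK : 0 ≤ K := integral_nonneg fun _ => (exp_pos _).le
  refine ⟨2 ^ n * v + K + 1, by positivity, fun R => ?_⟩
  have hRn : 0 ≤ ‖R‖ ^ n := by positivity
  calc ∫ x, exp (-ε * ‖x‖) * exp (-ε' * ‖R - x‖) ∂μ
      ≤ exp (-ε' * ‖R‖) * ((2 * ‖R‖) ^ n * v + K) :=
        integral_exp_neg_mul_norm_mul_exp_neg_mul_norm_sub_le μ hε' hle R
    _ ≤ exp (-ε' * ‖R‖) * ((2 ^ n * v + K + 1) * (1 + ‖R‖ ^ n)) := by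
        gcongr
        rw [mul_pow]
        nlinarith [mul_nonneg (pow_nonneg zero_le_two n) hv, mul_nonneg hK hRn]
    _ = (2 ^ n * v + K + 1) * (1 + ‖R‖ ^ n) * exp (-ε' * ‖R‖) := by ring

end Integral

theorem statement17_general (d : ℕ) (eps eps' : ℝ) (heps' : 0 < eps')
    (hle : eps' ≤ eps) :
    ∃ C : ℝ, 0 < C ∧ ∀ R : Ed d,
      (∫ x : Ed d, Real.exp (-eps * ‖x‖) * Real.exp (-eps' * ‖R - x‖))
        ≤ C * (1 + ‖R‖ ^ d) * Real.exp (-eps' * ‖R‖) := by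
  simpa only [finrank_euclideanSpace_fin] using
    exists_integral_exp_neg_mul_norm_mul_exp_neg_mul_norm_sub_le (volume : Measure (Ed d)) heps' hle

/-- the convolution-type estimate
`∫ e^{-ε|x|} e^{-ε'|R−x|} dx ≤ C (1 + |R|^d) e^{-ε'|R|}` for `0 < ε' ≤ ε`. -/
theorem statement17 (d : ℕ) (hd : 1 ≤ d) (eps eps' : ℝ) (heps' : 0 < eps')
    (hle : eps' ≤ eps) :
    ∃ C : ℝ, 0 < C ∧ ∀ R : Ed d,
      (∫ x : Ed d, Real.exp (-eps * ‖x‖) * Real.exp (-eps' * ‖R - x‖))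
        ≤ C * (1 + ‖R‖ ^ d) * Real.exp (-eps' * ‖R‖) :=
  statement17_general d eps eps' heps' hle
end
end
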